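/- For constants b > a > 0, the scalar D-gap function δ^{ab}(λ, η) equals zero if and only if λ ≥ 0, η ≥ 0, and λ·η = 0. -/

import Mathlib

noncomputable def deltaGap (a b l e : ℝ) : ℝ :=
  ((b - a) / (2 * a * b)) * e ^ 2 - (1 / (2 * a)) * (max 0 (e - a * l)) ^ 2
    + (1 / (2 * b)) * (max 0 (e - b * l)) ^ 2

/-!
Writing `δᵃᵇ = φᵃ - φᵇ` with the regularized gap function `φᶜ(λ, η) = max_{t ≤ λ} (η t - c t² / 2)`,
whose maximizer is `t_c = min λ (η / c)`, testing `φᵃ` at `t_b` and `φᵇ` at `t_a` gives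
`(b - a) / 2 · t_b² ≤ δᵃᵇ ≤ (b - a) / 2 · t_a²`. Both bounds vanish exactly under complementarity.
-/

noncomputable def regularizedGap (c l e : ℝ) : ℝ :=
  (1 / (2 * c)) * (e ^ 2 - (max 0 (e - c * l)) ^ 2)

section

variable {c l e : ℝ}

theorem regularizedGap_eq (hc : 0 < c) :
    regularizedGap c l e = e * min l (e / c) - c / 2 * min l (e / c) ^ 2 := by
  unfold regularizedGap
  rcases le_total e (c * l) with h | h
  · rw [max_eq_left (by linarith), min_eq_right ((div_le_iff₀' hc).2 h)]
    field_simp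
    ring
  · rw [max_eq_right (by linarith), min_eq_left ((le_div_iff₀' hc).2 h)]
    field_simp
    ring

theorem le_regularizedGap (hc : 0 < c) {t : ℝ} (ht : t ≤ l) :
    e * t - c / 2 * t ^ 2 ≤ regularizedGap c l e := by
  rw [regularizedGap_eq hc]
  rcases le_total l (e / c) with h | h
  · -- on `t ≤ l ≤ e / c` the parabola is increasing
    rw [min_eq_left h]
    have hcl : c * l ≤ e := (le_div_iff₀' hc).1 h
    nlinarith [mul_nonneg (sub_nonneg.2 ht) (sub_nonneg.2 hcl), mul_nonneg (sub_nonneg.2 ht) hc.le]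
  · rw [min_eq_right h]
    have key : e * (e / c) - c / 2 * (e / c) ^ 2 - (e * t - c / 2 * t ^ 2)
        = (e - c * t) ^ 2 / (2 * c) := by
      field_simp
      ring
    nlinarith [div_nonneg (sq_nonneg (e - c * t)) (by positivity : (0 : ℝ) ≤ 2 * c)]

theorem min_div_eq_zero_iff (hc : 0 < c) : min l (e / c) = 0 ↔ 0 ≤ l ∧ 0 ≤ e ∧ l * e = 0 := by
  rcases le_total l (e / c) with h | h
  · rw [min_eq_left h]
    have hcl : c * l ≤ e := (le_div_iff₀' hc).1 h
    constructor
    · rintro rfl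
      exact ⟨le_rfl, by simpa using hcl, zero_mul e⟩
    · rintro ⟨hl, -, hle⟩
      rcases mul_eq_zero.1 hle with hl0 | rfl
      · exact hl0
      · nlinarith
  · rw [min_eq_right h, div_eq_zero_iff, or_iff_left hc.ne']
    have hcl : e ≤ c * l := (div_le_iff₀' hc).1 h
    constructor
    · rintro rfl
      exact ⟨by nlinarith, le_rfl, mul_zero l⟩
    · rintro ⟨-, he, hle⟩
      rcases mul_eq_zero.1 hle with rfl | he0
      · linarith
      · exact he0

end

section

variable {a b l e : ℝ}

theorem deltaGap_eq_sub (ha : a ≠ 0) (hb : b ≠ 0) :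
    deltaGap a b l e = regularizedGap a l e - regularizedGap b l e := by
  unfold deltaGap regularizedGap
  field_simp
  ring

theorem mul_sq_min_le_deltaGap (ha : 0 < a) (hb : 0 < b) :
    (b - a) / 2 * min l (e / b) ^ 2 ≤ deltaGap a b l e := by
  rw [deltaGap_eq_sub ha.ne' hb.ne', regularizedGap_eq hb]
  linarith [le_regularizedGap (e := e) ha (min_le_left l (e / b))]

theorem deltaGap_le_mul_sq_min (ha : 0 < a) (hb : 0 < b) :
    deltaGap a b l e ≤ (b - a) / 2 * min l (e / a) ^ 2 := by
  rw [deltaGap_eq_sub ha.ne' hb.ne', regularizedGap_eq ha]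
  linarith [le_regularizedGap (e := e) hb (min_le_left l (e / a))]

end

theorem deltaGap_eq_zero_iff (a b : ℝ) (ha : 0 < a) (hab : a < b) (l e : ℝ) :
    deltaGap a b l e = 0 ↔ 0 ≤ l ∧ 0 ≤ e ∧ l * e = 0 := by
  have hb : 0 < b := ha.trans hab
  have hba : 0 < (b - a) / 2 := by linarith
  have lower := mul_sq_min_le_deltaGap (l := l) (e := e) ha hb
  constructor
  · intro h
    rw [h] at lower
    rw [← min_div_eq_zero_iff hb, ← sq_eq_zero_iff]
    exact le_antisymm (nonpos_of_mul_nonpos_right lower hba) (sq_nonneg _)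
  · intro h
    have upper := deltaGap_le_mul_sq_min (l := l) (e := e) ha hb
    rw [(min_div_eq_zero_iff ha).2 h] at upper
    nlinarith [sq_nonneg (min l (e / b))]
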